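/- Fix N ∈ ℕ. Let Y₀ be a random variable with values in {0,…,N}, independent of (P,R), and let Y₁ be a random variable whose conditional distribution given (Y₀, P, R) = (k, p, r) is that of B₁ + B₂ with B₁, B₂ independent, B₁ ~ Binomial(k, r), B₂ ~ Binomial(N−k, 1−p). Assume Y₁ has the same distribution as Y₀. Then Cov(Y₀, Y₁) = (E[P] + E[R] − 1)·E[Y₀²] + (1 − E[P])·N·E[Y₀] − (E[Y₀])². -/

import Mathlib

/-!
Given `(Y₀, P, R) = (k, p, r)`, the law `convPMF N k p r` of `Y₁` is the coefficient sequence of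
`(r X + 1 - r) ^ k * ((1 - p) X + p) ^ (N - k)`. Its total mass is the value of this polynomial at
`1`, namely `1`, and its mean is the value of the derivative at `1`, namely `k r + (N - k)(1 - p)`.
Splitting `E[Y₀ Y₁]` over the fibres `{Y₀ = k}` therefore turns it into
`E[Y₀² R] + E[(N Y₀ - Y₀²)(1 - P)]`, which factorises since `Y₀` is independent of `(P, R)`;
stationarity gives `E[Y₁] = E[Y₀]`.
-/

open MeasureTheory ProbabilityTheory

/-- The probability mass function of the binomial distribution with `n` trials and success
probability `q`, evaluated at `j`. -/
noncomputable def binomPMF (n : ℕ) (q : ℝ) (j : ℕ) : ℝ :=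
  (n.choose j : ℝ) * q ^ j * (1 - q) ^ (n - j)

/-- The pmf at `m` of `B₁ + B₂` with `B₁ ~ Binomial(k, r)` and `B₂ ~ Binomial(N − k, 1 − p)`
independent. -/
noncomputable def convPMF (N k : ℕ) (p r : ℝ) (m : ℕ) : ℝ :=
  ∑ j ∈ Finset.range (m + 1), binomPMF k r j * binomPMF (N - k) (1 - p) (m - j)

open Finset

noncomputable def resampleMean (N k : ℕ) (p r : ℝ) : ℝ := k * r + ((N : ℝ) - k) * (1 - p)

section Generating

open Polynomial

noncomputable def binomPoly (n : ℕ) (q : ℝ) : ℝ[X] := (C q * X + C (1 - q)) ^ n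

noncomputable def convPoly (N k : ℕ) (p r : ℝ) : ℝ[X] := binomPoly k r * binomPoly (N - k) (1 - p)

lemma coeff_binomPoly (n : ℕ) (q : ℝ) (j : ℕ) : (binomPoly n q).coeff j = binomPMF n q j := by
  have hterm : ∀ i ∈ range (n + 1), (C q * X) ^ i * C (1 - q) ^ (n - i) * (n.choose i : ℝ[X])
      = C ((n.choose i : ℝ) * q ^ i * (1 - q) ^ (n - i)) * X ^ i := fun i _ => by
    simp only [mul_pow, C_mul, C_pow, map_natCast]
    ring
  rw [binomPoly, add_pow, sum_congr rfl hterm, finsetSum_coeff]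
  simp only [coeff_C_mul_X_pow]
  rw [sum_ite_eq]
  split_ifs with hj
  · rfl
  · simp [binomPMF, Nat.choose_eq_zero_of_lt (by simpa using hj)]

lemma coeff_convPoly (N k : ℕ) (p r : ℝ) (m : ℕ) :
    (convPoly N k p r).coeff m = convPMF N k p r m := by
  rw [convPoly, coeff_mul, Nat.sum_antidiagonal_eq_sum_range_succ
    (fun i j => (binomPoly k r).coeff i * (binomPoly (N - k) (1 - p)).coeff j)]
  simp only [coeff_binomPoly]
  rfl

lemma natDegree_binomPoly_le (n : ℕ) (q : ℝ) : (binomPoly n q).natDegree ≤ n := by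
  refine (natDegree_pow_le_of_le n ?_).trans (by rw [mul_one])
  compute_degree

lemma natDegree_convPoly_le {N k : ℕ} (hk : k ≤ N) (p r : ℝ) : (convPoly N k p r).natDegree ≤ N :=
  natDegree_mul_le.trans <| (add_le_add (natDegree_binomPoly_le _ _)
    (natDegree_binomPoly_le _ _)).trans (by omega)

lemma eval_one_binomPoly (n : ℕ) (q : ℝ) : (binomPoly n q).eval 1 = 1 := by
  simp [binomPoly]

lemma eval_one_derivative_binomPoly (n : ℕ) (q : ℝ) :
    (derivative (binomPoly n q)).eval 1 = n * q := by
  simp [binomPoly, derivative_pow]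

lemma sum_coeff_eq_eval_one {R : Type*} [Semiring R] {f : R[X]} {N : ℕ} (hf : f.natDegree ≤ N) :
    ∑ m ∈ range (N + 1), f.coeff m = f.eval 1 := by
  simp [eval_eq_sum_range' (Nat.lt_succ_of_le hf)]

lemma sum_mul_coeff_eq_eval_one_derivative {R : Type*} [CommSemiring R] {f : R[X]} {N : ℕ}
    (hf : f.natDegree ≤ N) : ∑ m ∈ range (N + 1), (m : R) * f.coeff m = (derivative f).eval 1 := by
  rw [derivative_eval, sum_over_range' _ (by simp) _ (Nat.lt_succ_of_le hf)]
  simp [mul_comm]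

lemma sum_convPMF {N k : ℕ} (hk : k ≤ N) (p r : ℝ) :
    ∑ m ∈ range (N + 1), convPMF N k p r m = 1 := by
  simp only [← coeff_convPoly]
  rw [sum_coeff_eq_eval_one (natDegree_convPoly_le hk p r), convPoly, eval_mul, eval_one_binomPoly,
    eval_one_binomPoly, mul_one]

lemma sum_mul_convPMF {N k : ℕ} (hk : k ≤ N) (p r : ℝ) :
    ∑ m ∈ range (N + 1), (m : ℝ) * convPMF N k p r m = resampleMean N k p r := by
  simp only [← coeff_convPoly]
  rw [sum_mul_coeff_eq_eval_one_derivative (natDegree_convPoly_le hk p r), convPoly]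
  simp only [derivative_mul, eval_add, eval_mul, eval_one_binomPoly, eval_one_derivative_binomPoly,
    resampleMean, Nat.cast_sub hk]
  ring

lemma convPMF_eq_zero_of_lt {N k m : ℕ} (hk : k ≤ N) (hm : N < m) (p r : ℝ) :
    convPMF N k p r m = 0 := by
  rw [← coeff_convPoly, coeff_eq_zero_of_natDegree_lt ((natDegree_convPoly_le hk p r).trans_lt hm)]

end Generating

lemma binomPMF_nonneg {q : ℝ} (hq : q ∈ Set.Icc (0 : ℝ) 1) (n j : ℕ) : 0 ≤ binomPMF n q j := by
  have := hq.1
  have := sub_nonneg.2 hq.2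
  unfold binomPMF
  positivity

lemma convPMF_nonneg {p r : ℝ} (hp : p ∈ Set.Icc (0 : ℝ) 1) (hr : r ∈ Set.Icc (0 : ℝ) 1)
    (N k m : ℕ) : 0 ≤ convPMF N k p r m :=
  sum_nonneg fun _ _ => mul_nonneg (binomPMF_nonneg hr _ _)
    (binomPMF_nonneg ⟨sub_nonneg.2 hp.2, by linarith [hp.1]⟩ _ _)

lemma convPMF_le_one {N k : ℕ} (hk : k ≤ N) {p r : ℝ} (hp : p ∈ Set.Icc (0 : ℝ) 1)
    (hr : r ∈ Set.Icc (0 : ℝ) 1) (m : ℕ) : convPMF N k p r m ≤ 1 := by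
  rcases le_or_gt m N with hm | hm
  · rw [← sum_convPMF hk p r]
    exact single_le_sum (fun i _ => convPMF_nonneg hp hr N k i) (mem_range.2 (by omega))
  · rw [convPMF_eq_zero_of_lt hk hm]
    exact zero_le_one

section BoundedNat

variable {Ω : Type*} [MeasurableSpace Ω] {μ : Measure Ω} {Y : Ω → ℕ} {N : ℕ}

lemma ae_norm_comp_le_sum (hYN : ∀ᵐ ω ∂μ, Y ω ≤ N) (g : ℕ → ℝ) :
    ∀ᵐ ω ∂μ, ‖g (Y ω)‖ ≤ ∑ k ∈ range (N + 1), ‖g k‖ := by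
  filter_upwards [hYN] with ω hω
  exact single_le_sum (fun k _ => norm_nonneg (g k)) (mem_range.2 (Nat.lt_succ_of_le hω))

lemma integrable_comp_of_ae_le [IsFiniteMeasure μ] (hY : Measurable Y)
    (hYN : ∀ᵐ ω ∂μ, Y ω ≤ N) (g : ℕ → ℝ) : Integrable (fun ω => g (Y ω)) μ :=
  .of_bound (measurable_from_nat.comp hY).aestronglyMeasurable _ (ae_norm_comp_le_sum hYN g)

lemma MeasureTheory.Integrable.comp_mul_of_ae_le {G : Ω → ℝ} (hG : Integrable G μ)
    (hY : Measurable Y) (hYN : ∀ᵐ ω ∂μ, Y ω ≤ N) (g : ℕ → ℝ) :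
    Integrable (fun ω => g (Y ω) * G ω) μ :=
  hG.bdd_mul (measurable_from_nat.comp hY).aestronglyMeasurable (ae_norm_comp_le_sum hYN g)

lemma integral_comp_mul_eq_sum {G : Ω → ℝ} (hG : Integrable G μ) (hY : Measurable Y)
    (hYN : ∀ᵐ ω ∂μ, Y ω ≤ N) (g : ℕ → ℝ) :
    ∫ ω, g (Y ω) * G ω ∂μ = ∑ k ∈ range (N + 1), g k * ∫ ω in {ω | Y ω = k}, G ω ∂μ := by
  have hfiber (k : ℕ) : MeasurableSet {ω | Y ω = k} := measurableSet_eq_fun hY measurable_const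
  have hsum : (fun ω => g (Y ω) * G ω) =ᵐ[μ]
      fun ω => ∑ k ∈ range (N + 1), {ω | Y ω = k}.indicator (fun ω => g k * G ω) ω := by
    filter_upwards [hYN] with ω hω
    simp only [Set.indicator_apply, Set.mem_ofPred_eq, sum_ite_eq,
      if_pos (mem_range.2 (Nat.lt_succ_of_le hω))]
  rw [integral_congr_ae hsum,
    integral_finsetSum _ fun k _ => (hG.const_mul (g k)).indicator (hfiber k)]
  simp only [integral_indicator (hfiber _), integral_const_mul]

lemma setIntegral_natCast_eq_of_measureReal_inter [IsFiniteMeasure μ] (hY : Measurable Y)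
    (hYN : ∀ᵐ ω ∂μ, Y ω ≤ N) {S : Set Ω} {K : ℕ → Ω → ℝ} (hK : ∀ m, Integrable (K m) μ)
    (hlaw : ∀ m, μ.real ({ω | Y ω = m} ∩ S) = ∫ ω in S, K m ω ∂μ) :
    ∫ ω in S, (Y ω : ℝ) ∂μ = ∫ ω in S, ∑ m ∈ range (N + 1), (m : ℝ) * K m ω ∂μ := by
  calc ∫ ω in S, (Y ω : ℝ) ∂μ = ∫ ω in S, (Y ω : ℝ) * 1 ∂μ := by simp only [mul_one]
    _ = ∑ m ∈ range (N + 1), (m : ℝ) * μ.real ({ω | Y ω = m} ∩ S) := by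
      rw [integral_comp_mul_eq_sum (integrable_const 1) hY (ae_restrict_of_ae hYN)]
      refine sum_congr rfl fun m _ => ?_
      rw [setIntegral_const, smul_eq_mul, mul_one,
        measureReal_restrict_apply (measurableSet_eq_fun hY measurable_const)]
    _ = _ := by
      simp only [hlaw, ← integral_const_mul]
      exact (integral_finsetSum _ fun m _ => ((hK m).const_mul _).integrableOn).symm

end BoundedNat

section Resampling

variable {Ω : Type*} [MeasurableSpace Ω] {μ : Measure Ω} {P R : Ω → ℝ}
  {N : ℕ} {Y₀ Y₁ : Ω → ℕ}

lemma integrable_convPMF_comp [IsFiniteMeasure μ] (hP : Measurable P) (hR : Measurable R)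
    (hY₀ : Measurable Y₀) (hY₀N : ∀ ω, Y₀ ω ≤ N)
    (hPR : ∀ᵐ ω ∂μ, P ω ∈ Set.Icc (0 : ℝ) 1 ∧ R ω ∈ Set.Icc (0 : ℝ) 1) (m : ℕ) :
    Integrable (fun ω => convPMF N (Y₀ ω) (P ω) (R ω) m) μ := by
  have hmeas : Measurable fun x : ℕ × ℝ × ℝ => convPMF N x.1 x.2.1 x.2.2 m :=
    measurable_from_prod_countable_right fun k => by unfold convPMF binomPMF; fun_prop
  refine .of_mem_Icc 0 1 (hmeas.comp (hY₀.prodMk (hP.prodMk hR))).aemeasurable ?_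
  filter_upwards [hPR] with ω h
  exact ⟨convPMF_nonneg h.1 h.2 _ _ _, convPMF_le_one (hY₀N ω) h.1 h.2 m⟩

lemma integral_mul_eq_integral_mul_resampleMean [IsFiniteMeasure μ] (hP : Measurable P)
    (hR : Measurable R) (hPR : ∀ᵐ ω ∂μ, P ω ∈ Set.Icc (0 : ℝ) 1 ∧ R ω ∈ Set.Icc (0 : ℝ) 1)
    (hY₀ : Measurable Y₀) (hY₁ : Measurable Y₁) (hY₀N : ∀ ω, Y₀ ω ≤ N)
    (hY₁N : ∀ᵐ ω ∂μ, Y₁ ω ≤ N)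
    (hlaw : ∀ m k : ℕ, μ.real ({ω | Y₁ ω = m} ∩ {ω | Y₀ ω = k})
      = ∫ ω in {ω | Y₀ ω = k}, convPMF N (Y₀ ω) (P ω) (R ω) m ∂μ) :
    ∫ ω, (Y₀ ω : ℝ) * Y₁ ω ∂μ = ∫ ω, (Y₀ ω : ℝ) * resampleMean N (Y₀ ω) (P ω) (R ω) ∂μ := by
  have hY₀N' : ∀ᵐ ω ∂μ, Y₀ ω ≤ N := ae_of_all _ hY₀N
  have int1P : Integrable (fun ω => 1 - P ω) μ :=
    (integrable_const 1).sub (.of_mem_Icc 0 1 hP.aemeasurable (hPR.mono fun _ h => h.1))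
  have intR : Integrable R μ := .of_mem_Icc 0 1 hR.aemeasurable (hPR.mono fun _ h => h.2)
  have intMean : Integrable (fun ω => resampleMean N (Y₀ ω) (P ω) (R ω)) μ :=
    (intR.comp_mul_of_ae_le hY₀ hY₀N' Nat.cast).add
      (int1P.comp_mul_of_ae_le hY₀ hY₀N' fun k => (N : ℝ) - k)
  have hfiber (k : ℕ) : ∫ ω in {ω | Y₀ ω = k}, (Y₁ ω : ℝ) ∂μ
      = ∫ ω in {ω | Y₀ ω = k}, resampleMean N (Y₀ ω) (P ω) (R ω) ∂μ := by
    rw [setIntegral_natCast_eq_of_measureReal_inter hY₁ hY₁N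
      (integrable_convPMF_comp hP hR hY₀ hY₀N hPR) (hlaw · k)]
    simp only [sum_mul_convPMF (hY₀N _)]
  rw [integral_comp_mul_eq_sum (integrable_comp_of_ae_le hY₁ hY₁N Nat.cast) hY₀ hY₀N' Nat.cast,
    integral_comp_mul_eq_sum intMean hY₀ hY₀N' Nat.cast]
  simp only [hfiber]

lemma integral_mul_resampleMean_of_indepFun [IsProbabilityMeasure μ] (hP : Integrable P μ)
    (hR : Integrable R μ) (hY₀ : Measurable Y₀) (hY₀N : ∀ᵐ ω ∂μ, Y₀ ω ≤ N)
    (hindep : IndepFun Y₀ (fun ω => (P ω, R ω)) μ) :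
    ∫ ω, (Y₀ ω : ℝ) * resampleMean N (Y₀ ω) (P ω) (R ω) ∂μ
      = (∫ ω, (Y₀ ω : ℝ) ^ 2 ∂μ) * (∫ ω, R ω ∂μ)
        + (N * (∫ ω, (Y₀ ω : ℝ) ∂μ) - ∫ ω, (Y₀ ω : ℝ) ^ 2 ∂μ) * (1 - ∫ ω, P ω ∂μ) := by
  have int1P : Integrable (fun ω => 1 - P ω) μ := (integrable_const 1).sub hP
  have hsplit : ∫ ω, (Y₀ ω : ℝ) * resampleMean N (Y₀ ω) (P ω) (R ω) ∂μ
      = ∫ ω, (Y₀ ω : ℝ) ^ 2 * R ω ∂μ + ∫ ω, (N * (Y₀ ω : ℝ) - (Y₀ ω : ℝ) ^ 2) * (1 - P ω) ∂μ := by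
    rw [← integral_add (hR.comp_mul_of_ae_le hY₀ hY₀N fun k => (k : ℝ) ^ 2)
      (int1P.comp_mul_of_ae_le hY₀ hY₀N fun k => (N : ℝ) * k - (k : ℝ) ^ 2)]
    exact integral_congr_ae (ae_of_all _ fun ω => by simp only [resampleMean]; ring)
  have hR_indep : ∫ ω, (Y₀ ω : ℝ) ^ 2 * R ω ∂μ = (∫ ω, (Y₀ ω : ℝ) ^ 2 ∂μ) * ∫ ω, R ω ∂μ :=
    (hindep.comp (φ := fun k : ℕ => (k : ℝ) ^ 2) measurable_from_nat
      measurable_snd).integral_mul_eq_mul_integral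
      (measurable_from_nat.comp hY₀).aestronglyMeasurable hR.aestronglyMeasurable
  have hP_indep : ∫ ω, (N * (Y₀ ω : ℝ) - (Y₀ ω : ℝ) ^ 2) * (1 - P ω) ∂μ
      = (∫ ω, (N * (Y₀ ω : ℝ) - (Y₀ ω : ℝ) ^ 2) ∂μ) * ∫ ω, (1 - P ω) ∂μ :=
    (hindep.comp (φ := fun k : ℕ => (N : ℝ) * k - (k : ℝ) ^ 2) measurable_from_nat
      (measurable_fst.const_sub 1)).integral_mul_eq_mul_integral
      (measurable_from_nat.comp hY₀).aestronglyMeasurable int1P.aestronglyMeasurable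
  rw [hsplit, hR_indep, hP_indep,
    integral_sub ((integrable_comp_of_ae_le hY₀ hY₀N Nat.cast).const_mul _)
      (integrable_comp_of_ae_le hY₀ hY₀N fun k => (k : ℝ) ^ 2),
    integral_const_mul, integral_sub (integrable_const 1) hP, integral_const, probReal_univ]
  simp

end Resampling

/-- In the stationary resampling model,
`Cov(Y₀, Y₁) = (E[P] + E[R] − 1)·E[Y₀²] + (1 − E[P])·N·E[Y₀] − (E[Y₀])²`. -/
theorem stmt_19
    {Ω : Type*} [MeasurableSpace Ω] (μ : Measure Ω) [IsProbabilityMeasure μ]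
    (P R : Ω → ℝ) (hP : Measurable P) (hR : Measurable R)
    (hPR : ∀ᵐ ω ∂μ, P ω ∈ Set.Ioo (0 : ℝ) 1 ∧ R ω ∈ Set.Ioo (0 : ℝ) 1)
    (N : ℕ) (Y₀ Y₁ : Ω → ℕ) (hY₀ : Measurable Y₀) (hY₁ : Measurable Y₁)
    (hY₀N : ∀ ω, Y₀ ω ≤ N)
    (hindep : IndepFun Y₀ (fun ω => (P ω, R ω)) μ)
    (hcond : ∀ (m : ℕ) (s : Set (ℕ × ℝ × ℝ)), MeasurableSet s →
      (μ {ω | Y₁ ω = m ∧ (Y₀ ω, P ω, R ω) ∈ s}).toReal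
        = ∫ ω in {ω | (Y₀ ω, P ω, R ω) ∈ s}, convPMF N (Y₀ ω) (P ω) (R ω) m ∂μ)
    (hstat : Measure.map Y₁ μ = Measure.map Y₀ μ) :
    (∫ ω, (Y₀ ω : ℝ) * (Y₁ ω : ℝ) ∂μ)
        - (∫ ω, (Y₀ ω : ℝ) ∂μ) * (∫ ω, (Y₁ ω : ℝ) ∂μ)
      = ((∫ ω, P ω ∂μ) + (∫ ω, R ω ∂μ) - 1) * (∫ ω, (Y₀ ω : ℝ) ^ 2 ∂μ)
        + (1 - ∫ ω, P ω ∂μ) * (N : ℝ) * (∫ ω, (Y₀ ω : ℝ) ∂μ)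
        - (∫ ω, (Y₀ ω : ℝ) ∂μ) ^ 2 := by
  have hid : IdentDistrib Y₀ Y₁ μ μ := ⟨hY₀.aemeasurable, hY₁.aemeasurable, hstat.symm⟩
  have hY₀N' : ∀ᵐ ω ∂μ, Y₀ ω ≤ N := ae_of_all _ hY₀N
  have hY₁N : ∀ᵐ ω ∂μ, Y₁ ω ≤ N :=
    hid.ae_snd (measurableSet_le measurable_id measurable_const) hY₀N'
  have hmean : ∫ ω, (Y₁ ω : ℝ) ∂μ = ∫ ω, (Y₀ ω : ℝ) ∂μ :=
    (hid.comp (u := fun k : ℕ => (k : ℝ)) measurable_from_nat).integral_eq.symm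
  have hPR' : ∀ᵐ ω ∂μ, P ω ∈ Set.Icc (0 : ℝ) 1 ∧ R ω ∈ Set.Icc (0 : ℝ) 1 :=
    hPR.mono fun _ h => ⟨Set.Ioo_subset_Icc_self h.1, Set.Ioo_subset_Icc_self h.2⟩
  rw [integral_mul_eq_integral_mul_resampleMean hP hR hPR' hY₀ hY₁ hY₀N hY₁N
      fun m k => hcond m _ (measurable_fst (measurableSet_singleton k)),
    integral_mul_resampleMean_of_indepFun
      (.of_mem_Icc 0 1 hP.aemeasurable (hPR'.mono fun _ h => h.1))
      (.of_mem_Icc 0 1 hR.aemeasurable (hPR'.mono fun _ h => h.2)) hY₀ hY₀N' hindep, hmean]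
  ring
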